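/- arXiv:math/0501329 — 4 statements merged into one kernel-verified Lean document; each statement's English description precedes it below -/
import Mathlib

section
/- Let V be an n-dimensional complex vector space and let a be an (n-1)-dimensional abelian Lie subalgebra of sl(V) (traceless endomorphisms, with bracket the commutator). If a contains an endomorphism x with n distinct eigenvalues, then a equals the intersection of the centralizer of x with sl(V); in particular a consists of simultaneously diagonalizable endomorphisms. -/
/-!
Every endomorphism commuting with `x` preserves its eigenlines `K ∙ bᵢ`, so it is diagonal in
the basis `b` and is determined by its diagonal. Reading off the diagonal thus embeds the
traceless part of the centralizer of `x` into the hyperplane `∑ dᵢ = 0` of `Kⁿ`, which has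
dimension `n - 1`. Since `a` lies in this traceless centralizer and already has dimension
`n - 1`, the two coincide.
-/

open Module

theorem finrank_ker_sum_proj (K ι : Type*) [Field K] [Fintype ι] :
    finrank K (LinearMap.ker (∑ i, LinearMap.proj i : (ι → K) →ₗ[K] K)) =
      Fintype.card ι - 1 := by
  classical
  rcases isEmpty_or_nonempty ι with hι | ⟨⟨i₀⟩⟩
  · simp [Submodule.eq_bot_of_subsingleton]
  · have hne : (∑ i, LinearMap.proj i : (ι → K) →ₗ[K] K) ≠ 0 := fun h => by
      simpa using LinearMap.congr_fun h (Pi.single i₀ 1)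
    have := Dual.finrank_ker_add_one_of_ne_zero hne
    rw [finrank_pi] at this
    omega

namespace Module.Basis

variable {K V ι : Type*} [Field K] [AddCommGroup V] [Module K V] (b : Basis ι K V)
  {x : End K V} {μ : ι → K}

theorem repr_apply_of_apply_eq_smul (hx : ∀ i, x (b i) = μ i • b i) (v : V) (j : ι) :
    b.repr (x v) j = μ j * b.repr v j := by
  suffices b.coord j ∘ₗ x = μ j • b.coord j from LinearMap.congr_fun this v
  refine b.ext fun i => ?_
  by_cases hij : i = j
  · subst hij; simp [hx]
  · simp [hx, hij]

theorem apply_eq_repr_smul_of_commute (hx : ∀ i, x (b i) = μ i • b i) (hμ : Function.Injective μ)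
    {y : End K V} (hxy : x * y = y * x) (i : ι) :
    y (b i) = b.repr (y (b i)) i • b i := by
  classical
  have hxv : x (y (b i)) = μ i • y (b i) := by
    rw [← End.mul_apply, hxy, End.mul_apply, hx, map_smul]
  refine b.repr.injective (Finsupp.ext fun j => ?_)
  by_cases hij : j = i
  · subst hij; simp
  · have hcoeff : μ j * b.repr (y (b i)) j = μ i * b.repr (y (b i)) j := by
      rw [← repr_apply_of_apply_eq_smul b hx, hxv]; simp
    have hzero : b.repr (y (b i)) j = 0 := by
      by_contra h
      exact hμ.ne hij (mul_right_cancel₀ h hcoeff)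
    simp [hzero, Ne.symm hij]

theorem finrank_centralizer_inf_ker_trace_le [Fintype ι] (hx : ∀ i, x (b i) = μ i • b i)
    (hμ : Function.Injective μ) :
    finrank K ↥((Subalgebra.centralizer K {x}).toSubmodule ⊓ LinearMap.ker (LinearMap.trace K V)) ≤
      Fintype.card ι - 1 := by
  classical
  set S := (Subalgebra.centralizer K {x}).toSubmodule ⊓ LinearMap.ker (LinearMap.trace K V)
  let diag : End K V →ₗ[K] (ι → K) :=
    Matrix.diagLinearMap ι K K ∘ₗ (LinearMap.toMatrix b b).toLinearMap
  have hdiag : ∀ y i, diag y i = b.repr (y (b i)) i := fun y i =>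
    LinearMap.toMatrix_apply b b y i i
  have hinj : Function.Injective (diag.domRestrict S) := by
    rw [← LinearMap.ker_eq_bot, Submodule.eq_bot_iff]
    rintro ⟨y, hyS⟩ hy
    have hxy : x * y = y * x := by simpa [Set.mem_centralizer_iff] using hyS.1
    refine Subtype.ext (b.ext fun i => ?_)
    rw [b.apply_eq_repr_smul_of_commute hx hμ hxy i, ← hdiag]
    simp [show diag y = 0 from LinearMap.mem_ker.mp hy]
  have hrange : LinearMap.range (diag.domRestrict S) ≤ LinearMap.ker (∑ i, LinearMap.proj i) := by
    rintro _ ⟨⟨y, -, hy⟩, rfl⟩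
    simpa [LinearMap.trace_eq_matrix_trace K b, Matrix.trace, diag] using hy
  calc finrank K S = finrank K (LinearMap.range (diag.domRestrict S)) :=
        (LinearMap.finrank_range_of_inj hinj).symm
    _ ≤ finrank K (LinearMap.ker (∑ i, LinearMap.proj i : (ι → K) →ₗ[K] K)) :=
        Submodule.finrank_mono hrange
    _ = Fintype.card ι - 1 := finrank_ker_sum_proj K ι

end Module.Basis

theorem abelian_subalgebra_with_regular_semisimple_eq_centralizer_inter_sl_general
    (V : Type*) [AddCommGroup V] [Module ℂ V] [FiniteDimensional ℂ V]
    (n : ℕ)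
    (a : Submodule ℂ (Module.End ℂ V))
    (ha_sl : ∀ y ∈ a, LinearMap.trace ℂ V y = 0)
    (ha_dim : Module.finrank ℂ a = n - 1)
    (ha_ab : ∀ y ∈ a, ∀ z ∈ a, y * z = z * y)
    (x : Module.End ℂ V) (hxa : x ∈ a)
    (μ : Fin n → ℂ) (hμ : Function.Injective μ)
    (b : Module.Basis (Fin n) ℂ V) (hx : ∀ i, x (b i) = μ i • b i) :
    ((a : Set (Module.End ℂ V)) =
      {y : Module.End ℂ V | x * y = y * x ∧ LinearMap.trace ℂ V y = 0}) ∧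
    ∀ y ∈ a, ∀ i : Fin n, ∃ c : ℂ, y (b i) = c • b i := by
  set S := (Subalgebra.centralizer ℂ {x}).toSubmodule ⊓ LinearMap.ker (LinearMap.trace ℂ V)
  have haS : a ≤ S := fun y hy =>
    ⟨by simpa [Set.mem_centralizer_iff] using ha_ab x hxa y hy, ha_sl y hy⟩
  have ha_eq : a = S := Submodule.eq_of_le_of_finrank_le haS <| by
    simpa [ha_dim] using b.finrank_centralizer_inf_ker_trace_le hx hμ
  refine ⟨?_, fun y hy i => ⟨_, b.apply_eq_repr_smul_of_commute hx hμ (ha_ab x hxa y hy) i⟩⟩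
  ext y
  simp [ha_eq, S, Set.mem_centralizer_iff]

/-- If an `(n-1)`-dimensional abelian Lie subalgebra `a` of `sl(V)` (traceless
endomorphisms of an `n`-dimensional complex vector space, with commutator bracket)
contains an endomorphism `x` with `n` distinct eigenvalues, then `a` is the
intersection of the centralizer of `x` with `sl(V)`; in particular every element of
`a` is diagonal in the eigenbasis of `x`, hence `a` consists of simultaneously
diagonalizable endomorphisms. -/
theorem abelian_subalgebra_with_regular_semisimple_eq_centralizer_inter_sl
    (V : Type*) [AddCommGroup V] [Module ℂ V] [FiniteDimensional ℂ V]
    (n : ℕ) (hV : Module.finrank ℂ V = n)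
    (a : Submodule ℂ (Module.End ℂ V))
    (ha_sl : ∀ y ∈ a, LinearMap.trace ℂ V y = 0)
    (ha_dim : Module.finrank ℂ a = n - 1)
    (ha_ab : ∀ y ∈ a, ∀ z ∈ a, y * z = z * y)
    (x : Module.End ℂ V) (hxa : x ∈ a)
    (μ : Fin n → ℂ) (hμ : Function.Injective μ)
    (b : Module.Basis (Fin n) ℂ V) (hx : ∀ i, x (b i) = μ i • b i) :
    ((a : Set (Module.End ℂ V)) =
      {y : Module.End ℂ V | x * y = y * x ∧ LinearMap.trace ℂ V y = 0}) ∧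
    ∀ y ∈ a, ∀ i : Fin n, ∃ c : ℂ, y (b i) = c • b i :=
  abelian_subalgebra_with_regular_semisimple_eq_centralizer_inter_sl_general V n a ha_sl ha_dim
    ha_ab x hxa μ hμ b hx
end

section
/- Let V = ℂⁿ with standard basis e₁,...,eₙ, indices taken modulo n, let U = span(e₁,...,e_{n-1}), let ι : U → V the inclusion and π : V → U the projection along eₙ, and define B(e_i) = π ∘ J^i ∘ ι where J is the cyclic shift Je_i = e_{i+1}. Then for all u, v ∈ U, the commutator satisfies [B(u), B(v)](w) = (Σ_i w_{n-i} u_i) v − (Σ_j w_{n-j} v_j) u for all w ∈ U, where u = Σ u_i e_i etc. -/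
/-- Projection of `ℂⁿ` (with `n = m+1`) onto `U = span(e₁,…,e_{n-1})` along the last
basis vector `eₙ`: it kills the last coordinate. -/
def cyclicProj (m : ℕ) (v : Fin (m + 1) → ℂ) : Fin (m + 1) → ℂ :=
  fun k => if k = Fin.last m then 0 else v k

/-- The map `B : U → End(U)` determined by `B(e_i) = π ∘ Jⁱ ∘ ι` for `1 ≤ i ≤ n−1`,
where `J` is the cyclic shift `J e_i = e_{i+1}` (indices mod `n`), `ι : U → ℂⁿ` the
inclusion and `π` the projection along `eₙ`.  Here indices are zero-based: the basis
vector `e_i` of the paper is the `(i-1)`-st coordinate vector, so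
`(Jˢ v) k = v (k - s)` and `B(u)(w) = Σ_i u_i · π (J^{i+1} (ι w))` (the term
`i = m` is irrelevant since `u ∈ U` has vanishing last coordinate). -/
noncomputable def cyclicB (m : ℕ) (u : Fin (m + 1) → ℂ) (w : Fin (m + 1) → ℂ) : Fin (m + 1) → ℂ :=
  cyclicProj m (fun k => ∑ i : Fin (m + 1), u i * cyclicProj m w (k - (i + 1)))

/-
`B(u) = π ∘ C(u) ∘ ι` with `C(u) = Σ_i u_i J^{i+1}` in the commutative algebra `ℂ[J]`.
Since `ι ∘ π = 1 - eₙ ⊗ eₙ*`, one gets `B(u) B(v) w = π C(u) C(v) w - (C(v) w)ₙ · π C(u) eₙ`.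
The first terms cancel in the commutator because `C(u)` and `C(v)` commute, while
`C(u) eₙ = u` (as `J^{i+1} eₙ = e_i`) and `(C(v) w)ₙ = Σ_j w_{n-j} v_j`.
-/

lemma Fin.last_eq_neg_one (m : ℕ) : (Fin.last m : Fin (m + 1)) = -1 :=
  eq_neg_of_add_eq_zero_left (Fin.last_add_one m)

namespace CyclicB

variable {R : Type*} [CommRing R] {m : ℕ}

/-- `C(u) = Σ_i u_i J^{i+1}` on all of `Rⁿ`, so that `cyclicB m u = π ∘ cyclicConv u ∘ ι`. -/
def cyclicConv (u w : Fin (m + 1) → R) : Fin (m + 1) → R :=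
  fun k => ∑ i, u i * w (k - (i + 1))

lemma cyclicConv_sub (u w w' : Fin (m + 1) → R) :
    cyclicConv u (w - w') = cyclicConv u w - cyclicConv u w' := by
  funext k
  simp only [cyclicConv, Pi.sub_apply, mul_sub, Finset.sum_sub_distrib]

lemma cyclicConv_comm_left (u v w : Fin (m + 1) → R) :
    cyclicConv u (cyclicConv v w) = cyclicConv v (cyclicConv u w) := by
  funext k
  simp only [cyclicConv, Finset.mul_sum]
  rw [Finset.sum_comm]
  refine Finset.sum_congr rfl fun i _ => Finset.sum_congr rfl fun j _ => ?_
  rw [sub_right_comm, mul_left_comm]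

lemma cyclicConv_single_last (u : Fin (m + 1) → R) (c : R) :
    cyclicConv u (Pi.single (Fin.last m) c) = c • u := by
  funext k
  have hshift : ∀ i : Fin (m + 1), k - (i + 1) = Fin.last m ↔ k = i := fun i => by
    rw [Fin.last_eq_neg_one, sub_add_eq_sub_sub, ← zero_sub, sub_left_inj, sub_eq_zero]
  simp [cyclicConv, Pi.single_apply, hshift, mul_comm]

lemma cyclicConv_last (v w : Fin (m + 1) → R) :
    cyclicConv v w (Fin.last m) = ∑ k, w (-(k + 2)) * v k := by
  refine Finset.sum_congr rfl fun k _ => ?_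
  rw [mul_comm, Fin.last_eq_neg_one]
  congr 2
  open Fin.CommRing in ring

end CyclicB

open CyclicB

lemma cyclicProj_eq_sub (m : ℕ) (y : Fin (m + 1) → ℂ) :
    cyclicProj m y = y - Pi.single (Fin.last m) (y (Fin.last m)) := by
  funext k
  by_cases hk : k = Fin.last m <;> simp [cyclicProj, hk]

lemma cyclicProj_eq_self {m : ℕ} {w : Fin (m + 1) → ℂ} (hw : w (Fin.last m) = 0) :
    cyclicProj m w = w := by
  rw [cyclicProj_eq_sub, hw, Pi.single_zero, sub_zero]

lemma cyclicProj_sub (m : ℕ) (y z : Fin (m + 1) → ℂ) :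
    cyclicProj m (y - z) = cyclicProj m y - cyclicProj m z := by
  simp only [cyclicProj_eq_sub, Pi.sub_apply, Pi.single_sub]
  abel

lemma cyclicProj_smul (m : ℕ) (c : ℂ) (y : Fin (m + 1) → ℂ) :
    cyclicProj m (c • y) = c • cyclicProj m y := by
  simp only [cyclicProj_eq_sub, Pi.smul_apply, Pi.single_smul', smul_sub]

lemma cyclicB_apply_last (m : ℕ) (u w : Fin (m + 1) → ℂ) : cyclicB m u w (Fin.last m) = 0 := by
  simp [cyclicB, cyclicProj]

lemma cyclicB_eq_cyclicProj_cyclicConv {m : ℕ} (u : Fin (m + 1) → ℂ) {w : Fin (m + 1) → ℂ}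
    (hw : w (Fin.last m) = 0) : cyclicB m u w = cyclicProj m (cyclicConv u w) := by
  rw [cyclicB, cyclicProj_eq_self hw]
  rfl

lemma cyclicB_cyclicB {m : ℕ} {u : Fin (m + 1) → ℂ} (v : Fin (m + 1) → ℂ) {w : Fin (m + 1) → ℂ}
    (hu : u (Fin.last m) = 0) (hw : w (Fin.last m) = 0) :
    cyclicB m u (cyclicB m v w) =
      cyclicProj m (cyclicConv u (cyclicConv v w)) - (∑ k, w (-(k + 2)) * v k) • u := by
  rw [cyclicB_eq_cyclicProj_cyclicConv u (cyclicB_apply_last m v w),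
    cyclicB_eq_cyclicProj_cyclicConv v hw, cyclicProj_eq_sub m (cyclicConv v w),
    cyclicConv_sub, cyclicConv_single_last, cyclicConv_last, cyclicProj_sub, cyclicProj_smul,
    cyclicProj_eq_self hu]

/-- For `u, v, w ∈ U` one has
`[B(u),B(v)](w) = (Σ_i w_{n-i} u_i) v − (Σ_j w_{n-j} v_j) u`,
where `w_n = 0` by convention (in zero-based indices, `w_{n-i}` with `i = k+1`
becomes `w (-(k+2))` in `Fin n` arithmetic). -/
theorem cyclicB_commutator (m : ℕ) (u v w : Fin (m + 1) → ℂ)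
    (hu : u (Fin.last m) = 0) (hv : v (Fin.last m) = 0) (hw : w (Fin.last m) = 0) :
    cyclicB m u (cyclicB m v w) - cyclicB m v (cyclicB m u w) =
      (∑ k : Fin (m + 1), w (-(k + 2)) * u k) • v -
      (∑ k : Fin (m + 1), w (-(k + 2)) * v k) • u := by
  rw [cyclicB_cyclicB v hu hw, cyclicB_cyclicB u hv hw, cyclicConv_comm_left,
    sub_sub_sub_cancel_left]
end

section
/- Fix n ≥ 2 and t ∈ ℂ. The set a(t) of n×n matrices M with M_{i,n} = x_i, M_{i,j} = t·x_{i−j mod n} for 1 ≤ i,j ≤ n−1 with i ≠ j, M_{n,j} = t²·x_{n−j} for 1 ≤ j ≤ n−1, and zero diagonal (for arbitrary parameters x₁,...,x_{n-1} ∈ ℂ), is an abelian Lie subalgebra of sl_n(ℂ) of dimension n−1 (for the commutator bracket). -/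
/-!
Each matrix of `a(t)` has the form `M_z = (c i j · z (i - j))_{i ≠ j}` with zero diagonal, indexed by
`ℤ/n`, where the weights satisfy `c i k · c k j = d i j` for every `k ∉ {i, j}`. Then
`(M_z M_w) i j = d i j · ∑_{k ∉ {i,j}} z (i - k) · w (k - j)`, and the involution `k ↦ i + j - k`
of the summation range swaps the roles of `z` and `w`, so the matrices commute. The map `z ↦ M_z`
is linear and, since the last column has nonzero weights, it only kills the multiples of `z 0`;
so the family spans a space of dimension `n - 1`.
-/

/-- The family `a(t)` of the paper: with `n = m+1` and zero-based indices
(`i,j : Fin n` representing rows/columns `i+1, j+1`, so the last row/column is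
`Fin.last m`), the matrix with parameters `z` (where `z k` is the paper's `x_k`
for `1 ≤ k ≤ n−1`; `z 0` is never used) has zero diagonal, entries `x_i` in the
last column, entries `t²·x_{n−j}` in the last row, and entries `t·x_{(i−j) mod n}`
elsewhere. -/
def redCurve (m : ℕ) (t : ℂ) (z : Fin (m + 1) → ℂ) :
    Matrix (Fin (m + 1)) (Fin (m + 1)) ℂ :=
  Matrix.of fun i j =>
    if i = j then 0
    else (if j = Fin.last m then 1 else if i = Fin.last m then t ^ 2 else t) * z (i - j)

section WeightedCirculant

variable {G R : Type*} [AddCommGroup G] [DecidableEq G]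

def weightedCirculant [CommRing R] (c : G → G → R) (z : G → R) : Matrix G G R :=
  Matrix.of fun i j => if i = j then 0 else c i j * z (i - j)

lemma trace_weightedCirculant [Fintype G] [CommRing R] (c : G → G → R) (z : G → R) :
    (weightedCirculant c z).trace = 0 := by
  simp [Matrix.trace, weightedCirculant]

lemma weightedCirculant_mul_apply [Fintype G] [CommRing R] {c d : G → G → R}
    (hcd : ∀ i j k, k ≠ i → k ≠ j → c i k * c k j = d i j) (z w : G → R) (i j : G) :
    (weightedCirculant c z * weightedCirculant c w) i j =
      ∑ k, if k = i ∨ k = j then 0 else d i j * (z (i - k) * w (k - j)) := by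
  refine Finset.sum_congr rfl fun k _ => ?_
  by_cases hki : k = i
  · simp [weightedCirculant, hki]
  by_cases hkj : k = j
  · simp [weightedCirculant, hkj]
  simp only [weightedCirculant, Matrix.of_apply, if_neg (Ne.symm hki), if_neg hkj,
    if_neg (not_or.mpr ⟨hki, hkj⟩), ← hcd i j k hki hkj]
  ring

theorem weightedCirculant_commute [Fintype G] [CommRing R] {c d : G → G → R}
    (hcd : ∀ i j k, k ≠ i → k ≠ j → c i k * c k j = d i j) (z w : G → R) :
    weightedCirculant c z * weightedCirculant c w =
      weightedCirculant c w * weightedCirculant c z := by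
  ext i j
  rw [weightedCirculant_mul_apply hcd, weightedCirculant_mul_apply hcd]
  refine (Fintype.sum_equiv (Equiv.subLeft (i + j)) _ _ fun k => ?_).symm
  have hi : i + j - k = i ↔ k = j := by rw [sub_eq_iff_eq_add, add_right_inj, eq_comm]
  have hj : i + j - k = j ↔ k = i := by rw [sub_eq_iff_eq_add, add_comm i j, add_right_inj, eq_comm]
  simp only [Equiv.subLeft_apply, hi, hj, or_comm (a := k = j),
    show i - (i + j - k) = k - j by abel, show i + j - k - j = i - k by abel, mul_comm (w _)]

variable {K : Type*} [Field K]

def weightedCirculantₗ (c : G → G → K) : (G → K) →ₗ[K] Matrix G G K where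
  toFun := weightedCirculant c
  map_add' z w := by
    ext i j
    simp only [weightedCirculant, Matrix.of_apply, Matrix.add_apply, Pi.add_apply]
    split <;> ring
  map_smul' a z := by
    ext i j
    simp only [weightedCirculant, Matrix.of_apply, Matrix.smul_apply, Pi.smul_apply,
      smul_eq_mul, RingHom.id_apply]
    split <;> ring

lemma ker_weightedCirculantₗ {c : G → G → K} {j₀ : G} (hc : ∀ i, i ≠ j₀ → c i j₀ ≠ 0) :
    LinearMap.ker (weightedCirculantₗ c) = K ∙ Pi.single 0 1 := by
  ext z
  rw [LinearMap.mem_ker, Submodule.mem_span_singleton]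
  constructor
  · intro hz
    refine ⟨z 0, funext fun k => ?_⟩
    by_cases hk : k = 0
    · simp [hk]
    have hne : k + j₀ ≠ j₀ := by simpa using hk
    have hentry := congrFun (congrFun hz (k + j₀)) j₀
    simp only [weightedCirculantₗ, LinearMap.coe_mk, AddHom.coe_mk, weightedCirculant,
      Matrix.of_apply, if_neg hne, add_sub_cancel_right, Matrix.zero_apply] at hentry
    simp [hk, (mul_eq_zero.mp hentry).resolve_left (hc _ hne)]
  · rintro ⟨a, rfl⟩
    ext i j
    by_cases hij : i = j
    · simp [weightedCirculantₗ, weightedCirculant, hij]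
    · simp [weightedCirculantₗ, weightedCirculant, hij, sub_ne_zero.mpr hij]

theorem finrank_span_range_weightedCirculant [Fintype G] {c : G → G → K} {j₀ : G}
    (hc : ∀ i, i ≠ j₀ → c i j₀ ≠ 0) :
    Module.finrank K (Submodule.span K (Set.range (weightedCirculant c))) = Fintype.card G - 1 := by
  have hspan : Submodule.span K (Set.range (weightedCirculant c)) =
      LinearMap.range (weightedCirculantₗ c) := by
    rw [← Submodule.span_eq (LinearMap.range _), LinearMap.coe_range]
    rfl
  rw [hspan]
  have hrank := LinearMap.finrank_range_add_finrank_ker (weightedCirculantₗ c)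
  rw [ker_weightedCirculantₗ hc, finrank_span_singleton (by simp),
    Module.finrank_fintype_fun_eq_card] at hrank
  omega

end WeightedCirculant

def redCurveWeight (m : ℕ) (t : ℂ) (i j : Fin (m + 1)) : ℂ :=
  if j = Fin.last m then 1 else if i = Fin.last m then t ^ 2 else t

lemma redCurve_eq_weightedCirculant (m : ℕ) (t : ℂ) :
    redCurve m t = weightedCirculant (redCurveWeight m t) := rfl

lemma redCurveWeight_mul_redCurveWeight {m : ℕ} (t : ℂ) {i j k : Fin (m + 1)}
    (hki : k ≠ i) (hkj : k ≠ j) :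
    redCurveWeight m t i k * redCurveWeight m t k j =
      if i = Fin.last m then (if j = Fin.last m then t ^ 2 else t ^ 3)
      else (if j = Fin.last m then t else t ^ 2) := by
  unfold redCurveWeight
  by_cases hk : k = Fin.last m <;> by_cases hi : i = Fin.last m <;>
    by_cases hj : j = Fin.last m <;> simp_all <;> ring

theorem redCurve_abelian_subalgebra_general (m : ℕ) (t : ℂ) :
    (∀ z : Fin (m + 1) → ℂ, Matrix.trace (redCurve m t z) = 0) ∧
    (∀ z z' : Fin (m + 1) → ℂ,
      redCurve m t z * redCurve m t z' = redCurve m t z' * redCurve m t z) ∧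
    Module.finrank ℂ (Submodule.span ℂ (Set.range (redCurve m t))) = m := by
  rw [redCurve_eq_weightedCirculant]
  refine ⟨trace_weightedCirculant _,
    weightedCirculant_commute fun i j k => redCurveWeight_mul_redCurveWeight t, ?_⟩
  have hlast : ∀ i, i ≠ Fin.last m → redCurveWeight m t i (Fin.last m) ≠ 0 := by
    simp [redCurveWeight]
  simpa using finrank_span_range_weightedCirculant hlast

/-- For every `n ≥ 2` and `t ∈ ℂ`, the set `a(t)` of matrices above is an abelian
Lie subalgebra of `sl_n(ℂ)` of dimension `n − 1`: all its elements are traceless,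
any two of them commute (so all brackets vanish), and it is a linear subspace of
dimension `n − 1 = m`. -/
theorem redCurve_abelian_subalgebra (m : ℕ) (hm : 1 ≤ m) (t : ℂ) :
    (∀ z : Fin (m + 1) → ℂ, Matrix.trace (redCurve m t z) = 0) ∧
    (∀ z z' : Fin (m + 1) → ℂ,
      redCurve m t z * redCurve m t z' = redCurve m t z' * redCurve m t z) ∧
    Module.finrank ℂ (Submodule.span ℂ (Set.range (redCurve m t))) = m :=
  redCurve_abelian_subalgebra_general m t
end

section
/- Let U = ℂ³ and, for u = (u₁,u₂,u₃) ∈ ℂ³, let B(u) = [[3u₁, −u₁, −u₁],[−u₂, 3u₂, −u₂],[−u₃, −u₃, 3u₃]] − (u₁+u₂+u₃)I (the symmetric map B : U → End(U) arising from the pencil generated by the conics (x−z)y and (x−y)z). Then for all u,v ∈ ℂ³, the image of the commutator [B(u),B(v)] is contained in span(u,v). -/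
/-- The explicit symmetric map `B : ℂ³ → End(ℂ³)` obtained from the generic pencil
of conics: `B(u) = [[3u₁,−u₁,−u₁],[−u₂,3u₂,−u₂],[−u₃,−u₃,3u₃]] − (u₁+u₂+u₃)·I`. -/
noncomputable def conicB (u : Fin 3 → ℂ) : Matrix (Fin 3) (Fin 3) ℂ :=
  !![3 * u 0, -u 0, -u 0; -u 1, 3 * u 1, -u 1; -u 2, -u 2, 3 * u 2] -
    (u 0 + u 1 + u 2) • (1 : Matrix (Fin 3) (Fin 3) ℂ)

/-- For all `u, v ∈ ℂ³`, the image of the commutator `[B(u),B(v)]` is contained in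
`span(u,v)`: for every `w`, the vector `[B(u),B(v)]w` lies in the linear span of
`u` and `v` (equivalently `u ∧ v ∧ [B(u),B(v)]w = 0` in `Λ³ℂ³`). -/
theorem conicB_commutator_image_mem_span (u v w : Fin 3 → ℂ) :
    (conicB u * conicB v - conicB v * conicB u).mulVec w ∈
      Submodule.span ℂ ({u, v} : Set (Fin 3 → ℂ)) := by
  set a : ℂ := -3*v 0*w 0 + v 0*w 1 + v 0*w 2 + v 1*w 0 - 3*v 1*w 1 + v 1*w 2
      + v 2*w 0 + v 2*w 1 - 3*v 2*w 2 with ha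
  set b : ℂ := 3*u 0*w 0 - u 0*w 1 - u 0*w 2 - u 1*w 0 + 3*u 1*w 1 - u 1*w 2
      - u 2*w 0 - u 2*w 1 + 3*u 2*w 2 with hb
  have key : (conicB u * conicB v - conicB v * conicB u).mulVec w = a • u + b • v := by
    funext i
    fin_cases i <;>
      simp [conicB, Matrix.mulVec, Matrix.mul_apply, Fin.sum_univ_three, dotProduct,
        Matrix.one_apply, ha, hb] <;> ring
  rw [key]
  exact Submodule.add_mem _
    (Submodule.smul_mem _ a (Submodule.subset_span (Set.mem_insert _ _)))
    (Submodule.smul_mem _ b (Submodule.subset_span (Set.mem_insert_of_mem _ rfl)))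
end
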